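/- arXiv:2007.03336 — 4 statements merged into one kernel-verified Lean document; each statement's English description precedes it below -/
import Mathlib

section
/- Let D ≥ 1 and let φ_1, …, φ_D ≥ 2 be integers, set M = Σ_{i=1}^D φ_i, and fix a configuration opt in the space Θ = Π_{i=1}^D {1, …, φ_i}. Let c > 0 be a real number and let (X_t)_{t≥0} be any stochastic process with values in Θ such that X_0 is uniformly distributed on Θ and almost surely the L1 distance between X_{t+1} and X_t is at most c for every t. Let T = inf{t ≥ 0 : X_t = opt} be the first hitting time of opt. Then E[T] ≥ M/(8c). -/
/-!
Along a trajectory whose steps have L1 length at most `c`, the L1 distance to `opt` drops by at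
most `c` per step, so `opt` cannot be reached before time `d(X₀, opt) / c`. Under the uniform
start, the mean of `d(X₀, opt)` is the sum over the coordinates of the mean of `|x - optᵢ|` over
`x ∈ {1, …, φᵢ}`, and that mean is at least `(φᵢ² - 1) / (4 φᵢ) ≥ φᵢ / 8`.
-/

open MeasureTheory Finset

theorem two_mul_sum_Icc_abs_sub_of_le {m o : ℕ} (h : m ≤ o) :
    2 * ∑ x ∈ Icc 1 m, |(x : ℝ) - o| = 2 * m * o - m * (m + 1) := by
  induction m with
  | zero => simp
  | succ m ih =>
    have hm : ((m + 1 : ℕ) : ℝ) ≤ o := by exact_mod_cast h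
    rw [sum_Icc_succ_top (by omega), mul_add, ih (by omega), abs_of_nonpos (by linarith)]
    push_cast
    ring

theorem two_mul_sum_Icc_abs_sub_of_ge {n o : ℕ} (h : o ≤ n) :
    2 * ∑ x ∈ Icc 1 n, |(x : ℝ) - o| = o * (o - 1) + (n - o) * (n - o + 1) := by
  induction n, h using Nat.le_induction with
  | base => rw [two_mul_sum_Icc_abs_sub_of_le le_rfl]; ring
  | succ n hn ih =>
    have ho : (o : ℝ) ≤ n := by exact_mod_cast hn
    rw [sum_Icc_succ_top (by omega), mul_add, ih, abs_of_nonneg (by push_cast; linarith)]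
    push_cast
    ring

theorem sq_sub_one_div_four_le_sum_Icc_abs_sub (n o : ℕ) :
    ((n : ℝ) ^ 2 - 1) / 4 ≤ ∑ x ∈ Icc 1 n, |(x : ℝ) - o| := by
  rcases le_total n o with h | h
  · have hsum := two_mul_sum_Icc_abs_sub_of_le h
    have hno : (n : ℝ) ≤ o := by exact_mod_cast h
    nlinarith [sq_nonneg ((n : ℝ) - 1)]
  · have hsum := two_mul_sum_Icc_abs_sub_of_ge h
    nlinarith [sq_nonneg (2 * (o : ℝ) - n - 1)]

theorem sum_piFinset_apply_eq_prod_erase_mul {ι κ R : Type*} [Fintype ι] [DecidableEq ι]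
    [CommSemiring R] (s : ι → Finset κ) (f : κ → R) (i : ι) :
    ∑ g ∈ Fintype.piFinset s, f (g i) = (∏ j ∈ univ.erase i, (#(s j) : R)) * ∑ b ∈ s i, f b := by
  have key := prod_univ_sum s fun j b => if j = i then f b else 1
  simp only [prod_ite_eq', mem_univ, if_true] at key
  rw [← key, ← mul_prod_erase univ _ (mem_univ i), mul_comm]
  congr 1
  · exact prod_congr rfl fun j hj => by simp [ne_of_mem_erase hj]
  · simp

theorem sum_piFinset_Icc_sum_abs_sub_ge {ι : Type*} [Fintype ι] [DecidableEq ι]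
    {φ : ι → ℕ} (hφ : ∀ i, 2 ≤ φ i) (o : ι → ℕ) :
    (∑ i, (φ i : ℝ)) * (∏ i, (φ i : ℝ)) / 8 ≤
      ∑ θ ∈ Fintype.piFinset fun i => Icc 1 (φ i), ∑ i, |(θ i : ℝ) - o i| := by
  rw [sum_comm, sum_mul, sum_div]
  refine sum_le_sum fun i _ => ?_
  rw [sum_piFinset_apply_eq_prod_erase_mul _ (fun x : ℕ => |(x : ℝ) - o i|),
    ← mul_prod_erase univ _ (mem_univ i)]
  simp only [Nat.card_Icc, add_tsub_cancel_right]
  have hsum := sq_sub_one_div_four_le_sum_Icc_abs_sub (φ i) (o i)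
  have hφi : (2 : ℝ) ≤ φ i := by exact_mod_cast hφ i
  have hP : 0 ≤ ∏ j ∈ univ.erase i, (φ j : ℝ) := prod_nonneg fun j _ => Nat.cast_nonneg _
  have hφsq : 0 ≤ (φ i : ℝ) ^ 2 - 2 := by nlinarith
  nlinarith [mul_le_mul_of_nonneg_left hsum hP, mul_nonneg hP hφsq]

theorem dist_le_mul_of_forall_dist_succ_le {E : Type*} [PseudoMetricSpace E] {x : ℕ → E}
    {c : ℝ} (hx : ∀ s, dist (x (s + 1)) (x s) ≤ c) (t : ℕ) : dist (x 0) (x t) ≤ t * c := by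
  simpa using dist_le_range_sum_of_dist_le (f := x) t fun {k} _ => (dist_comm _ _).trans_le (hx k)

theorem ofReal_dist_div_le_iInf_hit {α E : Type*} [PseudoMetricSpace E] (F : α → E)
    {x : ℕ → α} {c : ℝ} (hc : 0 < c) (hx : ∀ s, dist (F (x (s + 1))) (F (x s)) ≤ c) (y : α) :
    ENNReal.ofReal (dist (F (x 0)) (F y) / c) ≤ ⨅ (t : ℕ) (_ : x t = y), (t : ENNReal) := by
  refine le_iInf₂ fun t ht => ?_
  rw [← ENNReal.ofReal_natCast, ← ht]
  refine ENNReal.ofReal_le_ofReal ((div_le_iff₀ hc).2 ?_)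
  exact dist_le_mul_of_forall_dist_succ_le (x := F ∘ x) hx t

theorem sum_mul_le_lintegral_of_measure_fiber_eq {Ω α : Type*} [MeasurableSpace Ω]
    [MeasurableSpace α] [Countable α] [MeasurableSingletonClass α] {μ : Measure Ω}
    {Y : Ω → α} (hY : Measurable Y) {S : Finset α} {p : ENNReal}
    (hp : ∀ a ∈ S, μ {ω | Y ω = a} = p) (f : α → ENNReal) :
    (∑ a ∈ S, f a) * p ≤ ∫⁻ ω, f (Y ω) ∂μ := by
  rw [← lintegral_map (measurable_of_countable f) hY, lintegral_countable', sum_mul]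
  refine le_of_eq_of_le (sum_congr rfl fun a ha => ?_) (ENNReal.sum_le_tsum S)
  rw [Measure.map_apply hY (measurableSet_singleton a), ← hp a ha]
  rfl

theorem ofReal_div_le_sum_ofReal_mul_inv_prod {ι : Type*} [Fintype ι] [DecidableEq ι]
    {φ : ι → ℕ} (hφ : ∀ i, 2 ≤ φ i) (o : ι → ℕ) {c : ℝ} (hc : 0 < c) :
    ENNReal.ofReal (((∑ i, φ i : ℕ) : ℝ) / (8 * c)) ≤
      (∑ θ ∈ Fintype.piFinset fun i => Icc 1 (φ i),
        ENNReal.ofReal ((∑ i, |(θ i : ℝ) - o i|) / c)) * (1 / ∏ i, (φ i : ENNReal)) := by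
  have hN : (0 : ℝ) < ∏ i, (φ i : ℝ) :=
    prod_pos fun i _ => by exact_mod_cast (hφ i).trans_lt' two_pos
  have hprod : ∏ i, (φ i : ENNReal) = ENNReal.ofReal (∏ i, (φ i : ℝ)) := by
    simp only [ENNReal.ofReal_prod_of_nonneg fun i _ => Nat.cast_nonneg (φ i),
      ENNReal.ofReal_natCast]
  rw [hprod, ← ENNReal.ofReal_one, ← ENNReal.ofReal_div_of_pos hN,
    ← ENNReal.ofReal_sum_of_nonneg fun θ _ => by positivity,
    ← ENNReal.ofReal_mul (by positivity), ← sum_div]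
  refine ENNReal.ofReal_le_ofReal ?_
  rw [div_mul_div_comm, mul_one, le_div_iff₀ (mul_pos hc hN)]
  refine le_of_eq_of_le ?_ (sum_piFinset_Icc_sum_abs_sub_ge hφ o)
  rw [Nat.cast_sum]
  field_simp

def natToL1 {ι : Type*} (θ : ι → ℕ) : PiLp 1 (fun _ : ι => ℝ) :=
  WithLp.toLp 1 fun i => (θ i : ℝ)

theorem dist_natToL1 {ι : Type*} [Fintype ι] (θ θ' : ι → ℕ) :
    dist (natToL1 θ) (natToL1 θ') = ∑ i, |(θ i : ℝ) - θ' i| := by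
  simp [natToL1, PiLp.dist_eq_of_L1, Real.dist_eq]

theorem hitting_time_lower_bound_local_mutation_general
    {Ω : Type*} [MeasurableSpace Ω] (μ : Measure Ω)
    (D : ℕ) (φ : Fin D → ℕ) (hφ : ∀ i, 2 ≤ φ i)
    (opt : Fin D → ℕ)
    (c : ℝ) (hc : 0 < c)
    (X : ℕ → Ω → (Fin D → ℕ))
    (hmeas : ∀ t, Measurable (X t))
    (hX0 : ∀ θ ∈ Fintype.piFinset fun i => Finset.Icc 1 (φ i),
      μ {ω | X 0 ω = θ} = 1 / ∏ i, (φ i : ENNReal))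
    (hstep : ∀ᵐ ω ∂μ, ∀ t, ∑ i, |(X (t + 1) ω i : ℝ) - (X t ω i : ℝ)| ≤ c) :
    ENNReal.ofReal (((∑ i, φ i : ℕ) : ℝ) / (8 * c)) ≤
      ∫⁻ ω, (⨅ (t : ℕ) (_ : X t ω = opt), (t : ENNReal)) ∂μ := by
  have hhit : ∀ᵐ ω ∂μ, ENNReal.ofReal ((∑ i, |(X 0 ω i : ℝ) - opt i|) / c) ≤
      ⨅ (t : ℕ) (_ : X t ω = opt), (t : ENNReal) := by
    filter_upwards [hstep] with ω hω
    rw [← dist_natToL1]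
    exact ofReal_dist_div_le_iInf_hit natToL1 (x := fun t => X t ω) hc
      (fun s => (dist_natToL1 _ _).trans_le (hω s)) opt
  calc ENNReal.ofReal (((∑ i, φ i : ℕ) : ℝ) / (8 * c))
      ≤ (∑ θ ∈ Fintype.piFinset fun i => Icc 1 (φ i),
          ENNReal.ofReal ((∑ i, |(θ i : ℝ) - opt i|) / c)) * (1 / ∏ i, (φ i : ENNReal)) :=
        ofReal_div_le_sum_ofReal_mul_inv_prod hφ opt hc
    _ ≤ ∫⁻ ω, ENNReal.ofReal ((∑ i, |(X 0 ω i : ℝ) - opt i|) / c) ∂μ :=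
        sum_mul_le_lintegral_of_measure_fiber_eq (hmeas 0) hX0 _
    _ ≤ _ := lintegral_mono_ae hhit

/-- Theorem 1 of the paper. For any stochastic process `(X_t)` with
values in the configuration space `Θ = Π {1, …, φ_i}`, starting from the uniform
distribution on `Θ` and whose steps move by `L1` distance at most `c` almost surely,
the expected first hitting time of a fixed configuration `opt` is at least `M/(8c)`,
where `M = ∑ φ_i`.  The hitting time is the infimum in `ℝ≥0∞` (so `∞` if `opt` is
never hit), and its expectation is the lower Lebesgue integral. -/
theorem hitting_time_lower_bound_local_mutation
    {Ω : Type*} [MeasurableSpace Ω] (μ : Measure Ω) [IsProbabilityMeasure μ]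
    (D : ℕ) (hD : 1 ≤ D) (φ : Fin D → ℕ) (hφ : ∀ i, 2 ≤ φ i)
    (opt : Fin D → ℕ) (hopt : opt ∈ Fintype.piFinset fun i => Finset.Icc 1 (φ i))
    (c : ℝ) (hc : 0 < c)
    (X : ℕ → Ω → (Fin D → ℕ))
    (hmeas : ∀ t, Measurable (X t))
    (hrange : ∀ᵐ ω ∂μ, ∀ t, X t ω ∈ Fintype.piFinset fun i => Finset.Icc 1 (φ i))
    (hX0 : ∀ θ ∈ Fintype.piFinset fun i => Finset.Icc 1 (φ i),
      μ {ω | X 0 ω = θ} = 1 / ∏ i, (φ i : ENNReal))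
    (hstep : ∀ᵐ ω ∂μ, ∀ t, ∑ i, |(X (t + 1) ω i : ℝ) - (X t ω i : ℝ)| ≤ c) :
    ENNReal.ofReal (((∑ i, φ i : ℕ) : ℝ) / (8 * c)) ≤
      ∫⁻ ω, (⨅ (t : ℕ) (_ : X t ω = opt), (t : ENNReal)) ∂μ :=
  hitting_time_lower_bound_local_mutation_general μ D φ hφ opt c hc X hmeas hX0 hstep
end

section
/- Let φ ≥ 2 be an integer and let H_{φ−1} = Σ_{k=1}^{φ−1} 1/k. Consider the harmonic distribution on {1, …, φ−1}, assigning probability 1/(s·H_{φ−1}) to each step size s. Let d, d* be integers and α ≥ 1 a real number with 1 ≤ d* ≤ d ≤ φ−1 and d ≤ α·d*. Then the probability that a harmonically distributed step size lies in the interval {d − ⌊d*/2⌋, …, d} is at least 1/(2α·H_{φ−1}). -/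
/-!
The factor `1 / H_{φ-1}` is common to both sides, so it suffices to bound the plain harmonic
sum over the interval. Each of its `⌊d*/2⌋ + 1` terms is at least `1 / d`, and
`d ≤ α d* < 2α (⌊d*/2⌋ + 1)`.
-/

open Finset

theorem card_div_le_sum_one_div_Icc {m d : ℕ} (hm : m < d) :
    ((m + 1 : ℕ) : ℝ) / d ≤ ∑ s ∈ Icc (d - m) d, 1 / (s : ℝ) := by
  have hcard : #(Icc (d - m) d) = m + 1 := by
    rw [Nat.card_Icc]
    omega
  have hterm : ∀ s ∈ Icc (d - m) d, 1 / (d : ℝ) ≤ 1 / s := by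
    intro s hs
    rw [mem_Icc] at hs
    have hs_pos : (0 : ℝ) < s := by exact_mod_cast (show 0 < s by omega)
    exact one_div_le_one_div_of_le hs_pos (by exact_mod_cast hs.2)
  calc ((m + 1 : ℕ) : ℝ) / d = #(Icc (d - m) d) • (1 / (d : ℝ)) := by
        rw [hcard, nsmul_eq_mul, mul_one_div]
    _ ≤ ∑ s ∈ Icc (d - m) d, 1 / (s : ℝ) := card_nsmul_le_sum _ _ _ hterm

theorem one_div_two_mul_le_half_succ_div {d n : ℕ} {α : ℝ} (hd : 0 < d)
    (hdα : (d : ℝ) ≤ α * n) : 1 / (2 * α) ≤ ((n / 2 + 1 : ℕ) : ℝ) / d := by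
  have hd' : (0 : ℝ) < d := by exact_mod_cast hd
  have hα : 0 < α := pos_of_mul_pos_left (hd'.trans_le hdα) n.cast_nonneg
  have hn : (n : ℝ) ≤ 2 * (n / 2 : ℕ) + 1 := by
    exact_mod_cast (show n ≤ 2 * (n / 2) + 1 by omega)
  rw [div_le_div_iff₀ (by positivity) hd']
  push_cast
  nlinarith

theorem harmonic_step_interval_probability_general (φ : ℕ)
    (d dstar : ℕ) (h1 : 1 ≤ dstar) (h2 : dstar ≤ d)
    (α : ℝ) (hdα : (d : ℝ) ≤ α * (dstar : ℝ)) :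
    1 / (2 * α * (∑ k ∈ Finset.Icc 1 (φ - 1), (1 : ℝ) / (k : ℝ))) ≤
      ∑ s ∈ Finset.Icc (d - dstar / 2) d,
        1 / ((s : ℝ) * (∑ k ∈ Finset.Icc 1 (φ - 1), (1 : ℝ) / (k : ℝ))) := by
  set H := ∑ k ∈ Icc 1 (φ - 1), (1 : ℝ) / (k : ℝ)
  have hH : 0 ≤ H := sum_nonneg fun k _ => by positivity
  have hsum : 1 / (2 * α) ≤ ∑ s ∈ Icc (d - dstar / 2) d, 1 / (s : ℝ) :=
    (one_div_two_mul_le_half_succ_div (by omega) hdα).trans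
      (card_div_le_sum_one_div_Icc (by omega))
  simp only [div_mul_eq_div_div _ _ H, ← sum_div]
  exact div_le_div_of_nonneg_right hsum hH

/-- Let `φ ≥ 2` and `H_{φ−1} = ∑_{k=1}^{φ−1} 1/k`.  Under the
harmonic distribution on `{1, …, φ−1}` (step size `s` has probability
`1/(s·H_{φ−1})`), for integers `1 ≤ d* ≤ d ≤ φ−1` and a real `α ≥ 1` with
`d ≤ α·d*`, the probability that the step size lies in `{d − ⌊d*/2⌋, …, d}` is
at least `1/(2α·H_{φ−1})`. -/
theorem harmonic_step_interval_probability (φ : ℕ) (hφ : 2 ≤ φ)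
    (d dstar : ℕ) (h1 : 1 ≤ dstar) (h2 : dstar ≤ d) (h3 : d ≤ φ - 1)
    (α : ℝ) (hα : 1 ≤ α) (hdα : (d : ℝ) ≤ α * (dstar : ℝ)) :
    1 / (2 * α * (∑ k ∈ Finset.Icc 1 (φ - 1), (1 : ℝ) / (k : ℝ))) ≤
      ∑ s ∈ Finset.Icc (d - dstar / 2) d,
        1 / ((s : ℝ) * (∑ k ∈ Finset.Icc 1 (φ - 1), (1 : ℝ) / (k : ℝ))) :=
  harmonic_step_interval_probability_general φ d dstar h1 h2 α hdα
end

section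
/- Let φ ≥ 2 be an integer, let f : {1, …, φ} → ℝ be injective with minimizer x*, and consider the ParamHS Markov chain on {1, …, φ} induced by f. Let x ∈ {1, …, φ} be a state with |x − x*| ≥ 1, and let d* be an integer and α ≥ 1 a real number with 1 ≤ d* ≤ |x − x*| ≤ α·d*. Then, in one step of the chain from x, the probability that the mutation samples a point y with |y − x*| ≤ ⌊d*/2⌋ (i.e. that the sampled step size d yields a candidate set S containing such a point) is at least 1/(2α·H_{φ−1}). -/
/-!
Let `D = |x − x*|` and `m = ⌊d*/2⌋ < D`. Every step size `s` with `D − m ≤ s ≤ D` has a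
candidate on the side of `x*` that lies between `x` and `x*`, hence in `{1, …, φ}`, and within
`m` of `x*`. These `m + 1` step sizes are at most `D`, so they have total probability at least
`(m + 1)/(D·H_{φ−1})`, and `D ≤ α·d* ≤ 2α(m + 1)`.
-/

open Finset

lemma exists_step_mem_Icc_dist_le {lo hi a b s m : ℕ} (ha : a ∈ Icc lo hi) (hb : b ∈ Icc lo hi)
    (hsm : a.dist b ≤ s + m) (hs : s ≤ a.dist b) :
    ∃ y ∈ ({a - s, a + s} : Finset ℕ) ∩ Icc lo hi, y.dist b ≤ m := by
  simp only [mem_Icc] at ha hb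
  unfold Nat.dist at *
  rcases le_total b a with hba | hab
  · exact ⟨a - s, mem_inter.2 ⟨by simp, mem_Icc.2 ⟨by omega, by omega⟩⟩, by omega⟩
  · exact ⟨a + s, mem_inter.2 ⟨by simp, mem_Icc.2 ⟨by omega, by omega⟩⟩, by omega⟩

lemma Nat.dist_le_sub_of_mem_Icc {lo hi a b : ℕ} (ha : a ∈ Icc lo hi) (hb : b ∈ Icc lo hi) :
    a.dist b ≤ hi - lo := by
  simp only [mem_Icc] at ha hb
  unfold Nat.dist
  omega

lemma card_div_le_sum_one_div {S : Finset ℕ} {D : ℕ} (hS : ∀ s ∈ S, 0 < s ∧ s ≤ D) :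
    (#S : ℝ) / D ≤ ∑ s ∈ S, (1 : ℝ) / s := by
  rw [div_eq_mul_one_div, ← nsmul_eq_mul]
  refine card_nsmul_le_sum S _ _ fun s hs => ?_
  obtain ⟨hs0, hsD⟩ := hS s hs
  exact one_div_le_one_div_of_le (by exact_mod_cast hs0) (by exact_mod_cast hsD)

lemma one_div_two_mul_le_succ_div {α : ℝ} (hα : 0 < α) {D d : ℕ} (hD : 0 < D)
    (hDd : (D : ℝ) ≤ α * d) :
    1 / (2 * α) ≤ ((d / 2 + 1 : ℕ) : ℝ) / D := by
  have hd : (d : ℝ) ≤ 2 * ((d / 2 + 1 : ℕ) : ℝ) := by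
    exact_mod_cast (by omega : d ≤ 2 * (d / 2 + 1))
  rw [div_le_div_iff₀ (by positivity) (by positivity)]
  linarith [mul_le_mul_of_nonneg_left hd hα.le]

theorem paramHS_one_step_halving_probability_general (φ : ℕ)
    (x xstar dstar : ℕ) (hx : x ∈ Finset.Icc 1 φ) (hxs : xstar ∈ Finset.Icc 1 φ)
    (h1 : 1 ≤ dstar) (h2 : dstar ≤ Nat.dist x xstar)
    (α : ℝ) (hα : 1 ≤ α) (hdα : (Nat.dist x xstar : ℝ) ≤ α * (dstar : ℝ)) :
    1 / (2 * α * (∑ k ∈ Finset.Icc 1 (φ - 1), (1 : ℝ) / (k : ℝ))) ≤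
      ∑ s ∈ Finset.Icc 1 (φ - 1),
        if ∃ y ∈ ({x - s, x + s} : Finset ℕ) ∩ Finset.Icc 1 φ,
            Nat.dist y xstar ≤ dstar / 2
        then 1 / ((s : ℝ) * (∑ k ∈ Finset.Icc 1 (φ - 1), (1 : ℝ) / (k : ℝ)))
        else 0 := by
  set H := ∑ k ∈ Icc 1 (φ - 1), (1 : ℝ) / k
  set D := Nat.dist x xstar
  have hH : 0 ≤ H := sum_nonneg fun _ _ => by positivity
  have hDφ : D ≤ φ - 1 := Nat.dist_le_sub_of_mem_Icc hx hxs
  have hgood : Icc (D - dstar / 2) D ⊆ {s ∈ Icc 1 (φ - 1) |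
      ∃ y ∈ ({x - s, x + s} : Finset ℕ) ∩ Icc 1 φ, y.dist xstar ≤ dstar / 2} := fun s hs => by
    rw [mem_Icc] at hs
    exact mem_filter.2 ⟨mem_Icc.2 ⟨by omega, by omega⟩,
      exists_step_mem_Icc_dist_le hx hxs (by omega) hs.2⟩
  have hcard : #(Icc (D - dstar / 2) D) = dstar / 2 + 1 := by rw [Nat.card_Icc]; omega
  calc 1 / (2 * α * H) = 1 / (2 * α) / H := by rw [div_div]
    _ ≤ #(Icc (D - dstar / 2) D) / D / H := by
      rw [hcard]
      exact div_le_div_of_nonneg_right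
        (one_div_two_mul_le_succ_div (by linarith) (by omega) hdα) hH
    _ ≤ (∑ s ∈ Icc (D - dstar / 2) D, (1 : ℝ) / s) / H :=
      div_le_div_of_nonneg_right
        (card_div_le_sum_one_div fun s hs => by rw [mem_Icc] at hs; omega) hH
    _ = ∑ s ∈ Icc (D - dstar / 2) D, 1 / ((s : ℝ) * H) := by
      rw [sum_div]
      simp only [div_div]
    _ ≤ ∑ s ∈ Icc 1 (φ - 1) with
          ∃ y ∈ ({x - s, x + s} : Finset ℕ) ∩ Icc 1 φ, y.dist xstar ≤ dstar / 2,
          1 / ((s : ℝ) * H) :=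
      sum_le_sum_of_subset_of_nonneg hgood fun _ _ _ => by positivity
    _ = _ := sum_filter _ _

/-- One step of the ParamHS Markov chain on `{1, …, φ}` induced by
an injective `f` samples a step size `s ∈ {1, …, φ−1}` with probability
`1/(s·H_{φ−1})` and considers the candidate set `S = {x − s, x + s} ∩ {1, …, φ}`.
If the current state `x` satisfies `1 ≤ d* ≤ |x − x*| ≤ α·d*` for an integer `d*`
and a real `α ≥ 1`, then the probability that the sampled step size yields a
candidate set containing a point `y` with `|y − x*| ≤ ⌊d*/2⌋` is at least
`1/(2α·H_{φ−1})`.  Here `H_{φ−1} = ∑_{k=1}^{φ−1} 1/k` and distances are the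
natural-number distances `Nat.dist`. -/
theorem paramHS_one_step_halving_probability (φ : ℕ) (hφ : 2 ≤ φ)
    (x xstar dstar : ℕ) (hx : x ∈ Finset.Icc 1 φ) (hxs : xstar ∈ Finset.Icc 1 φ)
    (h1 : 1 ≤ dstar) (h2 : dstar ≤ Nat.dist x xstar)
    (α : ℝ) (hα : 1 ≤ α) (hdα : (Nat.dist x xstar : ℝ) ≤ α * (dstar : ℝ)) :
    1 / (2 * α * (∑ k ∈ Finset.Icc 1 (φ - 1), (1 : ℝ) / (k : ℝ))) ≤
      ∑ s ∈ Finset.Icc 1 (φ - 1),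
        if ∃ y ∈ ({x - s, x + s} : Finset ℕ) ∩ Finset.Icc 1 φ,
            Nat.dist y xstar ≤ dstar / 2
        then 1 / ((s : ℝ) * (∑ k ∈ Finset.Icc 1 (φ - 1), (1 : ℝ) / (k : ℝ)))
        else 0 :=
  paramHS_one_step_halving_probability_general φ x xstar dstar hx hxs h1 h2 α hα hdα
end

section
/- Let φ ≥ 2 be an integer, let f : {1, …, φ} → ℝ be injective with minimizer x*, and suppose f is (α, β)-approximately unimodal with respect to x* for a real α ≥ 1 and an integer 1 ≤ β ≤ φ. Consider the ParamHS Markov chain on {1, …, φ} induced by f, and for a starting state x₀ let T(x₀) = inf{t ≥ 0 : X_t = x*} be the hitting time of x* when X_0 = x₀. Then for every x₀ ∈ {1, …, φ}, E[T(x₀)] ≤ 4α·H_{φ−1}·log₂(φ) + 4αβ·H_{φ−1}. -/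
/-!
A drift argument. Put `g w = 4αH (β + log₂ |w - x*|)` with `H = H_{φ-1}`, and let `V x` be the
maximum of `g` over the points `w ≠ x*` with `f w ≤ f x` (or `0`). ParamHS only accepts
improvements of `f`, so `V` never increases along the chain. From a point `x` at distance `δ`
from `x*`: if `δ ≤ 4αβ`, the step size `δ`, of probability `1/(δH) ≥ 1/V x`, jumps to `x*`, where
`V = 0`; otherwise each of the `≥ δ/(4α)` step sizes `δ - k` with `β ≤ k ≤ δ/(2α)`, of probability
`≥ 1/(δH)` each, moves the chain (by approximate unimodality) to a point whose whole sublevel set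
lies within `αk ≤ δ/2` of `x*`, so that `V` drops by `4αH`. Either way `V` decreases by at least
`1` in expectation before `x*` is hit, so the expected hitting time is at most
`V x₀ ≤ 4αH (β + log₂ φ)`.
-/

open MeasureTheory
open scoped Classical

/-- The `(φ−1)`-th harmonic number `H_{φ−1} = ∑_{k=1}^{φ−1} 1/k`. -/
noncomputable def harmonicNumberPred (φ : ℕ) : ℝ :=
  ∑ k ∈ Finset.Icc 1 (φ - 1), (1 : ℝ) / (k : ℝ)

/-- The state reached by ParamHS from state `x` when the step size `d` is
sampled: the candidate set is `S = {x − d, x + d} ∩ {1, …, φ}`, `y` is the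
element of `S` minimising `f`, and the chain moves to `y` iff `f y < f x`
(staying at `x` if `S` is empty). -/
noncomputable def paramHSNext (φ : ℕ) (f : ℕ → ℝ) (x d : ℕ) : ℕ :=
  if h : ∃ y ∈ ({x - d, x + d} : Finset ℕ) ∩ Finset.Icc 1 φ,
      ∀ z ∈ ({x - d, x + d} : Finset ℕ) ∩ Finset.Icc 1 φ, f y ≤ f z then
    (if f h.choose < f x then h.choose else x)
  else x

/-- The transition probability of the ParamHS Markov chain on `{1, …, φ}`
induced by `f`: a step size `d ∈ {1, …, φ−1}` is sampled with probability
`1/(d·H_{φ−1})` and the chain moves to `paramHSNext φ f x d`. -/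
noncomputable def paramHSTransProb (φ : ℕ) (f : ℕ → ℝ) (x y : ℕ) : ℝ :=
  ∑ d ∈ Finset.Icc 1 (φ - 1),
    if paramHSNext φ f x d = y then 1 / ((d : ℝ) * harmonicNumberPred φ) else 0

/-- `(α, β)`-approximate unimodality (Definition 1 of the paper) of
`f : {1, …, φ} → ℝ` with respect to the point `xstar`. -/
def ApproxUnimodal (φ : ℕ) (f : ℕ → ℝ) (xstar : ℕ) (α : ℝ) (β : ℕ) : Prop :=
  ∀ x ∈ Finset.Icc 1 φ, ∀ y ∈ Finset.Icc 1 φ,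
    (β : ℝ) ≤ |(x : ℝ) - (xstar : ℝ)| →
    α * |(x : ℝ) - (xstar : ℝ)| < |(y : ℝ) - (xstar : ℝ)| → f x < f y

open scoped ENNReal

section HittingTime

variable {Ω : Type*}

noncomputable def hitTime (X : ℕ → Ω → ℕ) (target : ℕ) (ω : Ω) : ℝ≥0∞ :=
  ⨅ (t : ℕ) (_ : X t ω = target), (t : ℝ≥0∞)

def cylinder (X : ℕ → Ω → ℕ) {t : ℕ} (g : Fin (t + 1) → ℕ) : Set Ω :=
  {ω | ∀ s : Fin (t + 1), X s ω = g s}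

def HasTransitions [MeasurableSpace Ω] (μ : Measure Ω) (X : ℕ → Ω → ℕ) (P : ℕ → ℕ → ℝ≥0∞) :
    Prop :=
  ∀ (t : ℕ) (h : ℕ → ℕ) (y : ℕ),
    μ {ω | (∀ s ≤ t, X s ω = h s) ∧ X (t + 1) ω = y} = P (h t) y * μ {ω | ∀ s ≤ t, X s ω = h s}

/-- A sum over histories rather than the measure of the event "`X` avoids `target` up to time `t`
and `X t = x`", because `X` is not assumed to be measurable. -/
noncomputable def avoidingMass [MeasurableSpace Ω] (μ : Measure Ω) (X : ℕ → Ω → ℕ)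
    (target t x : ℕ) : ℝ≥0∞ :=
  ∑' g : Fin (t + 1) → ℕ,
    if (∀ s, g s ≠ target) ∧ g (Fin.last t) = x then μ (cylinder X g) else 0

variable {X : ℕ → Ω → ℕ}

lemma hitTime_le_tsum_indicator (target : ℕ) (ω : Ω) :
    hitTime X target ω ≤ ∑' t, {ω | ∀ s ≤ t, X s ω ≠ target}.indicator 1 ω := by
  by_cases hhit : ∃ t, X t ω = target
  · have hbefore : ∀ t < Nat.find hhit, ω ∈ {ω | ∀ s ≤ t, X s ω ≠ target} :=
      fun t ht s hs => Nat.find_min hhit (hs.trans_lt ht)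
    calc hitTime X target ω ≤ (Nat.find hhit : ℝ≥0∞) :=
          iInf₂_le (f := fun t (_ : X t ω = target) => (t : ℝ≥0∞)) _ (Nat.find_spec hhit)
      _ = ∑ t ∈ Finset.range (Nat.find hhit), {ω | ∀ s ≤ t, X s ω ≠ target}.indicator 1 ω := by
          rw [Finset.sum_congr rfl fun t ht =>
            Set.indicator_of_mem (hbefore t (Finset.mem_range.1 ht)) _]
          simp
      _ ≤ _ := ENNReal.sum_le_tsum _
  · have hnever : ∀ t, ω ∈ {ω | ∀ s ≤ t, X s ω ≠ target} := fun t s _ => not_exists.1 hhit s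
    simp [Set.indicator_of_mem (hnever _)]

lemma cylinder_eq_setOf {t : ℕ} {g : Fin (t + 1) → ℕ} {h : ℕ → ℕ}
    (hgh : ∀ s : Fin (t + 1), g s = h s) : cylinder X g = {ω | ∀ s ≤ t, X s ω = h s} := by
  ext ω
  refine ⟨fun hω s hs => (hω ⟨s, by omega⟩).trans (hgh _), fun hω s => ?_⟩
  exact (hω s (Nat.lt_succ_iff.1 s.isLt)).trans (hgh s).symm

variable [MeasurableSpace Ω] {μ : Measure Ω} {P : ℕ → ℕ → ℝ≥0∞}

lemma lintegral_hitTime_le_tsum (target : ℕ) :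
    ∫⁻ ω, hitTime X target ω ∂μ ≤ ∑' t, μ {ω | ∀ s ≤ t, X s ω ≠ target} := by
  -- `X` need not be measurable, so pass to measurable hulls before exchanging `∫⁻` and `∑'`.
  set A : ℕ → Set Ω := fun t => toMeasurable μ {ω | ∀ s ≤ t, X s ω ≠ target}
  calc ∫⁻ ω, hitTime X target ω ∂μ ≤ ∫⁻ ω, ∑' t, (A t).indicator 1 ω ∂μ :=
        lintegral_mono fun ω => (hitTime_le_tsum_indicator target ω).trans <|
          ENNReal.tsum_le_tsum fun t =>
            Set.indicator_le_indicator_of_subset (subset_toMeasurable _ _) (fun _ => zero_le) ω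
    _ = ∑' t, μ (A t) :=
        (lintegral_tsum fun t =>
          (measurable_const.indicator (measurableSet_toMeasurable _ _)).aemeasurable).trans <|
          tsum_congr fun t => lintegral_indicator_one (measurableSet_toMeasurable _ _)
    _ = ∑' t, μ {ω | ∀ s ≤ t, X s ω ≠ target} := tsum_congr fun t => measure_toMeasurable _

lemma HasTransitions.measure_cylinder_snoc (hP : HasTransitions μ X P) {t : ℕ}
    (g : Fin (t + 1) → ℕ) (y : ℕ) :
    μ (cylinder X (Fin.snoc g y : Fin (t + 2) → ℕ)) = P (g (Fin.last t)) y * μ (cylinder X g) := by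
  set h : ℕ → ℕ := fun n => if hn : n < t + 1 then g ⟨n, hn⟩ else y
  have hg : ∀ s : Fin (t + 1), g s = h s := fun s => by simp only [h, dif_pos s.isLt]
  have hsnoc : ∀ s : Fin (t + 2), (Fin.snoc g y : Fin (t + 2) → ℕ) s = h s :=
    Fin.lastCases (by simp [h]) fun s => by simpa using hg s
  have hlast : {ω | ∀ s ≤ t + 1, X s ω = h s}
      = {ω | (∀ s ≤ t, X s ω = h s) ∧ X (t + 1) ω = y} := by
    ext ω
    simp only [Set.mem_ofPred_eq, Nat.le_succ_iff_eq_or_le, or_imp, forall_and, forall_eq]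
    simp [h, and_comm]
  rw [cylinder_eq_setOf hsnoc, cylinder_eq_setOf hg, hlast, hP, hg]
  simp

lemma avoidingMass_self (target t : ℕ) : avoidingMass μ X target t target = 0 :=
  ENNReal.tsum_eq_zero.2 fun _ => if_neg fun hg => hg.1 _ hg.2

lemma avoidingMass_zero_le (target x : ℕ) : avoidingMass μ X target 0 x ≤ μ {ω | X 0 ω = x} := by
  calc avoidingMass μ X target 0 x
      ≤ ∑' g : Fin 1 → ℕ, if g 0 = x then μ (cylinder X g) else 0 :=
        ENNReal.tsum_le_tsum fun g => by
          split_ifs with h₁ h₂ <;> first | exact le_rfl | exact zero_le | exact absurd h₁.2 h₂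
    _ = ∑' y : ℕ, if y = x then μ (cylinder X (fun _ : Fin 1 => y)) else 0 :=
        ((Equiv.funUnique (Fin 1) ℕ).symm.tsum_eq _).symm
    _ ≤ μ {ω | X 0 ω = x} := by
        rw [tsum_ite_eq]
        exact measure_mono fun ω hω => hω 0

lemma HasTransitions.avoidingMass_succ_le (hP : HasTransitions μ X P) (target t x : ℕ) :
    avoidingMass μ X target (t + 1) x ≤ ∑' w, P w x * avoidingMass μ X target t w := by
  set A : (Fin (t + 1) → ℕ) → ℝ≥0∞ := fun g => if ∀ s, g s ≠ target then μ (cylinder X g) else 0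
  have hsnoc : ∀ (y : ℕ) (g : Fin (t + 1) → ℕ),
      (if (∀ s, (Fin.snoc g y : Fin (t + 2) → ℕ) s ≠ target) ∧
          (Fin.snoc g y : Fin (t + 2) → ℕ) (Fin.last (t + 1)) = x
        then μ (cylinder X (Fin.snoc g y : Fin (t + 2) → ℕ)) else 0)
      ≤ if y = x then P (g (Fin.last t)) x * A g else 0 := by
    intro y g
    split_ifs with hg hy
    · subst hy
      have hgt : ∀ s, g s ≠ target := fun s => by simpa using hg.1 s.castSucc
      simp only [A, if_pos hgt, hP.measure_cylinder_snoc, le_rfl]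
    · exact absurd (by simpa using hg.2) hy
    · exact zero_le
    · exact zero_le
  have hlast : ∀ g : Fin (t + 1) → ℕ, ∑' w, P w x *
      (if (∀ s, g s ≠ target) ∧ g (Fin.last t) = w then μ (cylinder X g) else 0)
      = P (g (Fin.last t)) x * A g := fun g =>
    (tsum_eq_single (g (Fin.last t)) fun w hw => by simp [Ne.symm hw]).trans (by simp [A])
  calc avoidingMass μ X target (t + 1) x
      = ∑' y, ∑' g : Fin (t + 1) → ℕ,
          if (∀ s, (Fin.snoc g y : Fin (t + 2) → ℕ) s ≠ target) ∧
              (Fin.snoc g y : Fin (t + 2) → ℕ) (Fin.last (t + 1)) = x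
            then μ (cylinder X (Fin.snoc g y : Fin (t + 2) → ℕ)) else 0 := by
        rw [avoidingMass, ← (Fin.snocEquiv fun _ => ℕ).tsum_eq, ← ENNReal.tsum_prod]
        rfl
    _ ≤ ∑' y, ∑' g : Fin (t + 1) → ℕ, if y = x then P (g (Fin.last t)) x * A g else 0 :=
        ENNReal.tsum_le_tsum fun y => ENNReal.tsum_le_tsum (hsnoc y)
    _ = ∑' g : Fin (t + 1) → ℕ, P (g (Fin.last t)) x * A g := by
        rw [ENNReal.tsum_comm]
        exact tsum_congr fun g => tsum_ite_eq x (fun _ => _)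
    _ = ∑' w, P w x * avoidingMass μ X target t w := by
        simp only [avoidingMass, ← ENNReal.tsum_mul_left, ← hlast]
        exact ENNReal.tsum_comm

lemma avoidingMass_zero_eq_zero_of_ne {target x₀ x : ℕ} (hstart : ∀ᵐ ω ∂μ, X 0 ω = x₀)
    (hx : x ≠ x₀) : avoidingMass μ X target 0 x = 0 :=
  nonpos_iff_eq_zero.1 <| (avoidingMass_zero_le target x).trans <|
    (measure_mono_null (fun ω (hω : X 0 ω = x) (h : X 0 ω = x₀) => hx (hω.symm.trans h))
      (ae_iff.1 hstart)).le

lemma HasTransitions.avoidingMass_eq_zero_of_notMem (hP : HasTransitions μ X P)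
    {target x₀ : ℕ} {S : Finset ℕ} (hS : ∀ x ∈ S, ∀ y ∉ S, y ≠ target → P x y = 0)
    (hx₀ : x₀ ∈ insert target S) (hstart : ∀ᵐ ω ∂μ, X 0 ω = x₀) (t : ℕ) {x : ℕ} (hx : x ∉ S) :
    avoidingMass μ X target t x = 0 := by
  obtain rfl | hxt := eq_or_ne x target
  · exact avoidingMass_self x t
  induction t generalizing x with
  | zero =>
    exact avoidingMass_zero_eq_zero_of_ne hstart fun h =>
      (Finset.mem_insert.1 (h ▸ hx₀)).elim hxt hx
  | succ t ih =>
    refine nonpos_iff_eq_zero.1 <| (hP.avoidingMass_succ_le target t x).trans <|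
      (ENNReal.tsum_eq_zero.2 fun w => ?_).le
    by_cases hw : w ∈ S
    · rw [hS w hw x hx hxt, zero_mul]
    · obtain rfl | hwt := eq_or_ne w target
      · rw [avoidingMass_self, mul_zero]
      · rw [ih hw hwt, mul_zero]

lemma measure_avoid_le_tsum_avoidingMass (target t : ℕ) :
    μ {ω | ∀ s ≤ t, X s ω ≠ target} ≤ ∑' x, avoidingMass μ X target t x := by
  set G : Set (Fin (t + 1) → ℕ) := {g | ∀ s, g s ≠ target}
  calc μ {ω | ∀ s ≤ t, X s ω ≠ target} ≤ μ (⋃ g : G, cylinder X g.1) :=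
        measure_mono fun ω hω => Set.mem_iUnion.2
          ⟨⟨fun s => X s ω, fun s => hω s (Nat.lt_succ_iff.1 s.isLt)⟩, fun _ => rfl⟩
    _ ≤ ∑' g : G, μ (cylinder X g.1) := measure_iUnion_le _
    _ = ∑' g, G.indicator (fun g => μ (cylinder X g)) g := tsum_subtype G fun g => μ (cylinder X g)
    _ = ∑' x, avoidingMass μ X target t x := by
        simp only [avoidingMass]
        rw [ENNReal.tsum_comm]
        refine tsum_congr fun g => ?_
        rw [tsum_eq_single (g (Fin.last t)) fun x hx => by simp [Ne.symm hx]]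
        simp [Set.indicator_apply, G]

variable {S : Finset ℕ} {target : ℕ} {V : ℕ → ℝ≥0∞}

lemma HasTransitions.measure_avoid_add_le (hP : HasTransitions μ X P) {t : ℕ}
    (hsupp : ∀ x ∉ S, avoidingMass μ X target t x = 0)
    (hdrift : ∀ x ∈ S, ∑ y ∈ S, P x y * V y + 1 ≤ V x) :
    μ {ω | ∀ s ≤ t, X s ω ≠ target} + ∑ x ∈ S, avoidingMass μ X target (t + 1) x * V x
      ≤ ∑ x ∈ S, avoidingMass μ X target t x * V x := by
  set a := avoidingMass μ X target
  calc μ {ω | ∀ s ≤ t, X s ω ≠ target} + ∑ x ∈ S, a (t + 1) x * V x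
      ≤ ∑ w ∈ S, a t w + ∑ x ∈ S, (∑ w ∈ S, P w x * a t w) * V x := by
        gcongr with x
        · exact (measure_avoid_le_tsum_avoidingMass target t).trans_eq (tsum_eq_sum hsupp)
        · exact (hP.avoidingMass_succ_le target t x).trans_eq
            (tsum_eq_sum fun w hw => by simp [a, hsupp w hw])
    _ = ∑ w ∈ S, a t w * (∑ x ∈ S, P w x * V x + 1) := by
        simp only [Finset.sum_mul, mul_add, mul_one, Finset.mul_sum]
        rw [Finset.sum_comm, ← Finset.sum_add_distrib]
        refine Finset.sum_congr rfl fun w _ => ?_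
        rw [add_comm]
        congr 1
        exact Finset.sum_congr rfl fun x _ => by ring
    _ ≤ ∑ w ∈ S, a t w * V w := by
        gcongr with w hw
        exact hdrift w hw

lemma sum_avoidingMass_zero_mul_le [IsProbabilityMeasure μ] {x₀ : ℕ}
    (hstart : ∀ᵐ ω ∂μ, X 0 ω = x₀) : ∑ x ∈ S, avoidingMass μ X target 0 x * V x ≤ V x₀ := by
  calc ∑ x ∈ S, avoidingMass μ X target 0 x * V x ≤ ∑ x ∈ S, if x = x₀ then V x₀ else 0 := by
        refine Finset.sum_le_sum fun x _ => ?_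
        split_ifs with hx
        · subst hx
          calc avoidingMass μ X target 0 x * V x ≤ 1 * V x := by
                gcongr
                exact (avoidingMass_zero_le target x).trans prob_le_one
            _ = V x := one_mul _
        · rw [avoidingMass_zero_eq_zero_of_ne hstart hx, zero_mul]
    _ ≤ V x₀ := by
        rw [Finset.sum_ite_eq']
        split_ifs <;> simp

theorem HasTransitions.lintegral_hitTime_le_of_drift [IsProbabilityMeasure μ]
    (hP : HasTransitions μ X P) (hS : ∀ x ∈ S, ∀ y ∉ S, y ≠ target → P x y = 0)
    (hdrift : ∀ x ∈ S, ∑ y ∈ S, P x y * V y + 1 ≤ V x) {x₀ : ℕ}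
    (hx₀ : x₀ ∈ insert target S) (hstart : ∀ᵐ ω ∂μ, X 0 ω = x₀) :
    ∫⁻ ω, hitTime X target ω ∂μ ≤ V x₀ := by
  set Φ : ℕ → ℝ≥0∞ := fun t => ∑ x ∈ S, avoidingMass μ X target t x * V x
  have htelescope : ∀ n, ∑ t ∈ Finset.range n, μ {ω | ∀ s ≤ t, X s ω ≠ target} + Φ n ≤ Φ 0 := by
    intro n
    induction n with
    | zero => simp
    | succ n ih =>
      rw [Finset.sum_range_succ, add_assoc]
      exact (add_le_add_right (hP.measure_avoid_add_le
        (fun x hx => hP.avoidingMass_eq_zero_of_notMem hS hx₀ hstart n hx) hdrift) _).trans ih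
  calc ∫⁻ ω, hitTime X target ω ∂μ ≤ ∑' t, μ {ω | ∀ s ≤ t, X s ω ≠ target} :=
        lintegral_hitTime_le_tsum target
    _ ≤ Φ 0 := ENNReal.tsum_le_of_sum_range_le fun n => le_self_add.trans (htelescope n)
    _ ≤ V x₀ := sum_avoidingMass_zero_mul_le hstart

end HittingTime

lemma ENNReal.sum_ofReal_mul_add_one_le {ι : Type*} {s : Finset ι} {p v : ι → ℝ} {c : ℝ}
    (hp : ∀ i ∈ s, 0 ≤ p i) (hv : ∀ i ∈ s, 0 ≤ v i) (h : ∑ i ∈ s, p i * v i + 1 ≤ c) :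
    ∑ i ∈ s, ENNReal.ofReal (p i) * ENNReal.ofReal (v i) + 1 ≤ ENNReal.ofReal c := by
  have hpv : ∀ i ∈ s, 0 ≤ p i * v i := fun i hi => mul_nonneg (hp i hi) (hv i hi)
  rw [← Finset.sum_congr rfl fun i hi => ENNReal.ofReal_mul (hp i hi), ← ENNReal.ofReal_one,
    ← ENNReal.ofReal_sum_of_nonneg hpv, ← ENNReal.ofReal_add (Finset.sum_nonneg hpv) zero_le_one]
  exact ENNReal.ofReal_le_ofReal h

lemma sum_mul_add_one_le_of_drop {ι : Type*} {s G : Finset ι} (hG : G ⊆ s) {p W : ι → ℝ}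
    {v ε : ℝ} (hp : ∀ i ∈ s, 0 ≤ p i) (hp1 : ∑ i ∈ s, p i = 1) (hW : ∀ i ∈ s, W i ≤ v)
    (hdrop : ∀ i ∈ G, W i ≤ v - ε) (hmass : 1 ≤ ε * ∑ i ∈ G, p i) :
    ∑ i ∈ s, p i * W i + 1 ≤ v := by
  calc ∑ i ∈ s, p i * W i + 1
      ≤ ∑ i ∈ s, p i * (v - if i ∈ G then ε else 0) + ε * ∑ i ∈ G, p i := by
        gcongr with i hi
        · exact hp i hi
        · split_ifs with hiG
          · exact hdrop i hiG
          · simpa using hW i hi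
    _ = v := by
        simp only [mul_sub, Finset.sum_sub_distrib, ← Finset.sum_mul, hp1, mul_ite, mul_zero,
          Finset.sum_ite_mem, Finset.inter_eq_right.2 hG]
        ring

lemma Real.logb_two_le_logb_sub_one {a b : ℝ} (ha : 0 < a) (hab : 2 * a ≤ b) :
    Real.logb 2 a ≤ Real.logb 2 b - 1 := by
  have hb : 0 < b / 2 := by linarith
  calc Real.logb 2 a ≤ Real.logb 2 (b / 2) := (Real.logb_le_logb one_lt_two ha hb).2 (by linarith)
    _ = Real.logb 2 b - 1 := by
        rw [Real.logb_div (by linarith) two_ne_zero, Real.logb_self_eq_one one_lt_two]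

lemma Nat.abs_cast_sub_eq_of_add_eq {a b δ : ℕ} (h : b + δ = a ∨ a + δ = b) :
    |(a : ℝ) - b| = δ := by
  rcases h with rfl | rfl <;> push_cast
  · simp
  · simp

lemma Nat.one_le_abs_cast_sub {a b : ℕ} (h : a ≠ b) : (1 : ℝ) ≤ |(a : ℝ) - b| := by
  have : (1 : ℤ) ≤ |(a : ℤ) - b| := Int.one_le_abs (sub_ne_zero.2 (by exact_mod_cast h))
  exact_mod_cast this

section SublevelMax

variable {ι : Type*} (S : Finset ι) (f g : ι → ℝ)

/-- Taking the maximum over a sublevel set of `f` makes this monotone in `f`, hence non-increasing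
along any chain that only accepts improvements of `f`. -/
noncomputable def sublevelMax (x : ι) : ℝ := (S.filter fun w => f w ≤ f x).fold max 0 g

variable {S f g}

lemma sublevelMax_nonneg (x : ι) : 0 ≤ sublevelMax S f g x :=
  Finset.le_fold_max _ |>.2 (Or.inl le_rfl)

lemma le_sublevelMax {x : ι} (hx : x ∈ S) : g x ≤ sublevelMax S f g x :=
  Finset.le_fold_max _ |>.2 (Or.inr ⟨x, Finset.mem_filter.2 ⟨hx, le_rfl⟩, le_rfl⟩)

lemma sublevelMax_le {x : ι} {c : ℝ} (hc : 0 ≤ c) (hg : ∀ w ∈ S, f w ≤ f x → g w ≤ c) :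
    sublevelMax S f g x ≤ c :=
  Finset.fold_max_le _ |>.2 ⟨hc, fun w hw => hg w (Finset.mem_filter.1 hw).1
    (Finset.mem_filter.1 hw).2⟩

lemma sublevelMax_mono {x y : ι} (h : f y ≤ f x) : sublevelMax S f g y ≤ sublevelMax S f g x :=
  sublevelMax_le (sublevelMax_nonneg x) fun _ hw hwy =>
    Finset.le_fold_max _ |>.2 (Or.inr ⟨_, Finset.mem_filter.2 ⟨hw, hwy.trans h⟩, le_rfl⟩)

end SublevelMax

section ParamHS

variable {φ : ℕ} {f : ℕ → ℝ} {xstar : ℕ} {α : ℝ} {β : ℕ}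

lemma harmonicNumberPred_nonneg (φ : ℕ) : 0 ≤ harmonicNumberPred φ :=
  Finset.sum_nonneg fun _ _ => by positivity

lemma one_le_harmonicNumberPred (hφ : 2 ≤ φ) : 1 ≤ harmonicNumberPred φ := by
  have h1 : 1 ∈ Finset.Icc 1 (φ - 1) := Finset.mem_Icc.2 ⟨le_rfl, by omega⟩
  simpa [harmonicNumberPred] using
    Finset.single_le_sum (fun k _ => by positivity) h1 (f := fun k : ℕ => (1 : ℝ) / k)

lemma sum_one_div_mul_harmonicNumberPred (hφ : 2 ≤ φ) :
    ∑ d ∈ Finset.Icc 1 (φ - 1), 1 / ((d : ℝ) * harmonicNumberPred φ) = 1 := by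
  have hH : harmonicNumberPred φ ≠ 0 := (one_le_harmonicNumberPred hφ).trans_lt' one_pos |>.ne'
  simp only [← div_div, ← Finset.sum_div]
  exact div_self hH

lemma paramHSNext_mem {x : ℕ} (d : ℕ) (hx : x ∈ Finset.Icc 1 φ) :
    paramHSNext φ f x d ∈ Finset.Icc 1 φ := by
  unfold paramHSNext
  split_ifs with h
  · exact (Finset.mem_inter.1 h.choose_spec.1).2
  all_goals exact hx

lemma paramHSNext_le (x d : ℕ) : f (paramHSNext φ f x d) ≤ f x := by
  unfold paramHSNext
  split_ifs with h h'
  · exact h'.le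
  all_goals exact le_rfl

lemma paramHSNext_le_of_mem {x d z : ℕ}
    (hz : z ∈ ({x - d, x + d} : Finset ℕ) ∩ Finset.Icc 1 φ) (hzx : f z < f x) :
    f (paramHSNext φ f x d) ≤ f z := by
  obtain ⟨b, hb, hbmin⟩ := Finset.exists_min_image _ f ⟨z, hz⟩
  have hex : ∃ y ∈ ({x - d, x + d} : Finset ℕ) ∩ Finset.Icc 1 φ,
      ∀ w ∈ ({x - d, x + d} : Finset ℕ) ∩ Finset.Icc 1 φ, f y ≤ f w := ⟨b, hb, hbmin⟩
  have hchoose : f hex.choose ≤ f z := hex.choose_spec.2 z hz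
  unfold paramHSNext
  rw [dif_pos hex, if_pos (hchoose.trans_lt hzx)]
  exact hchoose

lemma paramHSTransProb_nonneg (x y : ℕ) : 0 ≤ paramHSTransProb φ f x y :=
  Finset.sum_nonneg fun d _ => by have := harmonicNumberPred_nonneg φ; split_ifs <;> positivity

lemma paramHSTransProb_eq_zero_of_notMem {x y : ℕ} (hx : x ∈ Finset.Icc 1 φ)
    (hy : y ∉ Finset.Icc 1 φ) : paramHSTransProb φ f x y = 0 :=
  Finset.sum_eq_zero fun d _ =>
    if_neg fun h : paramHSNext φ f x d = y => hy (h ▸ paramHSNext_mem d hx)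

lemma sum_paramHSTransProb_mul {x : ℕ} (hx : x ∈ Finset.Icc 1 φ) (F : ℕ → ℝ) :
    ∑ y ∈ Finset.Icc 1 φ, paramHSTransProb φ f x y * F y
      = ∑ d ∈ Finset.Icc 1 (φ - 1),
          1 / ((d : ℝ) * harmonicNumberPred φ) * F (paramHSNext φ f x d) := by
  simp only [paramHSTransProb, Finset.sum_mul, ite_mul, zero_mul]
  rw [Finset.sum_comm]
  refine Finset.sum_congr rfl fun d _ => ?_
  rw [Finset.sum_ite_eq, if_pos (paramHSNext_mem d hx)]

noncomputable def distPotential (φ xstar : ℕ) (α : ℝ) (β w : ℕ) : ℝ :=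
  4 * α * harmonicNumberPred φ * (β + Real.logb 2 |(w : ℝ) - xstar|)

noncomputable def paramHSPotential (φ : ℕ) (f : ℕ → ℝ) (xstar : ℕ) (α : ℝ) (β : ℕ) : ℕ → ℝ :=
  sublevelMax ((Finset.Icc 1 φ).erase xstar) f (distPotential φ xstar α β)

lemma distPotential_le_of_logb_le (hα : 0 ≤ α) {w : ℕ} {L : ℝ}
    (h : Real.logb 2 |(w : ℝ) - xstar| ≤ L) :
    distPotential φ xstar α β w ≤ 4 * α * harmonicNumberPred φ * (β + L) := by
  have := harmonicNumberPred_nonneg φ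
  unfold distPotential
  gcongr

lemma mul_le_paramHSPotential (hα : 0 ≤ α) {x : ℕ} (hx : x ∈ (Finset.Icc 1 φ).erase xstar) :
    4 * α * harmonicNumberPred φ * β ≤ paramHSPotential φ f xstar α β x := by
  have hdist : (1 : ℝ) ≤ |(x : ℝ) - xstar| := Nat.one_le_abs_cast_sub (Finset.ne_of_mem_erase hx)
  have := harmonicNumberPred_nonneg φ
  refine le_trans ?_ (le_sublevelMax hx)
  unfold distPotential
  gcongr
  exact le_add_of_nonneg_right (Real.logb_nonneg one_lt_two hdist)

lemma paramHSPotential_self (hmin : ∀ y ∈ Finset.Icc 1 φ, y ≠ xstar → f xstar < f y) :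
    paramHSPotential φ f xstar α β xstar = 0 :=
  le_antisymm (sublevelMax_le le_rfl fun w hw hfw => absurd hfw
    (hmin w (Finset.mem_of_mem_erase hw) (Finset.ne_of_mem_erase hw)).not_ge)
    (sublevelMax_nonneg _)

lemma exists_paramHS_candidate {x δ k : ℕ} (hx : x ∈ Finset.Icc 1 φ)
    (hxs : xstar ∈ Finset.Icc 1 φ) (hδ : xstar + δ = x ∨ x + δ = xstar) (hk : k ≤ δ) :
    ∃ z ∈ ({x - (δ - k), x + (δ - k)} : Finset ℕ) ∩ Finset.Icc 1 φ,
      xstar + k = z ∨ z + k = xstar := by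
  simp only [Finset.mem_Icc] at hx hxs
  rcases hδ with h | h
  all_goals simp only [Finset.mem_inter, Finset.mem_insert, Finset.mem_singleton, Finset.mem_Icc]
  · exact ⟨xstar + k, by omega, Or.inl rfl⟩
  · exact ⟨xstar - k, by omega, Or.inr (by omega)⟩

lemma paramHSNext_eq_of_add_eq (hmin : ∀ y ∈ Finset.Icc 1 φ, y ≠ xstar → f xstar < f y)
    {x δ : ℕ} (hx : x ∈ (Finset.Icc 1 φ).erase xstar) (hxs : xstar ∈ Finset.Icc 1 φ)
    (hδ : xstar + δ = x ∨ x + δ = xstar) : paramHSNext φ f x δ = xstar := by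
  have hxI := Finset.mem_of_mem_erase hx
  obtain ⟨z, hz, hzk⟩ := exists_paramHS_candidate hxI hxs hδ (Nat.zero_le δ)
  obtain rfl : z = xstar := by omega
  rw [Nat.sub_zero] at hz
  by_contra hne
  exact (paramHSNext_le_of_mem hz (hmin x hxI (Finset.ne_of_mem_erase hx))).not_gt
    (hmin _ (paramHSNext_mem δ hxI) hne)

lemma paramHSPotential_paramHSNext_le_of_far (hα : 0 < α) (hβ1 : 1 ≤ β)
    (huni : ApproxUnimodal φ f xstar α β) {x δ k : ℕ} (hx : x ∈ (Finset.Icc 1 φ).erase xstar)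
    (hxs : xstar ∈ Finset.Icc 1 φ) (hδ : xstar + δ = x ∨ x + δ = xstar) (hβk : β ≤ k)
    (hkδ : k ≤ δ) (hfar : 2 * α * k ≤ δ) :
    paramHSPotential φ f xstar α β (paramHSNext φ f x (δ - k))
      ≤ paramHSPotential φ f xstar α β x - 4 * α * harmonicNumberPred φ := by
  have hxI := Finset.mem_of_mem_erase hx
  have hH := harmonicNumberPred_nonneg φ
  have hxδ : |(x : ℝ) - xstar| = δ := Nat.abs_cast_sub_eq_of_add_eq hδ
  obtain ⟨z, hz, hzk⟩ := exists_paramHS_candidate hxI hxs hδ hkδ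
  have hzI := (Finset.mem_inter.1 hz).2
  have hzk : |(z : ℝ) - xstar| = k := Nat.abs_cast_sub_eq_of_add_eq hzk
  have hk : (1 : ℝ) ≤ k := by exact_mod_cast hβ1.trans hβk
  have hzx : f z < f x := huni z hzI x hxI (by rw [hzk]; exact_mod_cast hβk)
    (by rw [hzk, hxδ]; nlinarith)
  have hnext := paramHSNext_le_of_mem hz hzx
  refine sublevelMax_le ?_ fun w hw hfw => ?_
  · have := mul_le_paramHSPotential (f := f) (β := β) hα.le hx
    have : (1 : ℝ) ≤ β := by exact_mod_cast hβ1
    linarith [mul_le_mul_of_nonneg_left this (by positivity : 0 ≤ 4 * α * harmonicNumberPred φ)]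
  · have hwx : |(w : ℝ) - xstar| ≤ α * k := by
      by_contra! hwx
      exact (huni z hzI w (Finset.mem_of_mem_erase hw) (by rw [hzk]; exact_mod_cast hβk)
        (by rwa [hzk])).not_ge (hfw.trans hnext)
    have hw0 : 0 < |(w : ℝ) - xstar| :=
      one_pos.trans_le (Nat.one_le_abs_cast_sub (Finset.ne_of_mem_erase hw))
    have hlog := Real.logb_two_le_logb_sub_one hw0
      (show 2 * |(w : ℝ) - xstar| ≤ |(x : ℝ) - xstar| by rw [hxδ]; nlinarith)
    refine (distPotential_le_of_logb_le hα.le hlog).trans ?_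
    have hgx : distPotential φ xstar α β x ≤ paramHSPotential φ f xstar α β x := le_sublevelMax hx
    rw [distPotential] at hgx
    linarith

lemma paramHSPotential_drift_of_drop (hφ : 2 ≤ φ)
    (hmin : ∀ y ∈ Finset.Icc 1 φ, y ≠ xstar → f xstar < f y) {x : ℕ}
    (hx : x ∈ (Finset.Icc 1 φ).erase xstar) {G : Finset ℕ} (hG : G ⊆ Finset.Icc 1 (φ - 1))
    {ε : ℝ} (hdrop : ∀ d ∈ G, paramHSPotential φ f xstar α β (paramHSNext φ f x d)
      ≤ paramHSPotential φ f xstar α β x - ε)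
    (hmass : 1 ≤ ε * ∑ d ∈ G, 1 / ((d : ℝ) * harmonicNumberPred φ)) :
    ∑ y ∈ (Finset.Icc 1 φ).erase xstar,
        paramHSTransProb φ f x y * paramHSPotential φ f xstar α β y + 1
      ≤ paramHSPotential φ f xstar α β x := by
  have := harmonicNumberPred_nonneg φ
  rw [Finset.sum_erase _ (by rw [paramHSPotential_self hmin, mul_zero]),
    sum_paramHSTransProb_mul (Finset.mem_of_mem_erase hx)]
  exact sum_mul_add_one_le_of_drop hG (fun d _ => by positivity)
    (sum_one_div_mul_harmonicNumberPred hφ) (fun d _ => sublevelMax_mono (paramHSNext_le x d))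
    hdrop hmass

lemma paramHSPotential_drift_of_near (hφ : 2 ≤ φ) (hα : 0 ≤ α)
    (hmin : ∀ y ∈ Finset.Icc 1 φ, y ≠ xstar → f xstar < f y) {x δ : ℕ}
    (hx : x ∈ (Finset.Icc 1 φ).erase xstar) (hxs : xstar ∈ Finset.Icc 1 φ)
    (hδ : xstar + δ = x ∨ x + δ = xstar) (hnear : (δ : ℝ) ≤ 4 * α * β) :
    ∑ y ∈ (Finset.Icc 1 φ).erase xstar,
        paramHSTransProb φ f x y * paramHSPotential φ f xstar α β y + 1
      ≤ paramHSPotential φ f xstar α β x := by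
  have hxI := Finset.mem_of_mem_erase hx
  simp only [Finset.mem_Icc] at hxI hxs
  have hδ1 : 1 ≤ δ := by have := Finset.ne_of_mem_erase hx; omega
  have hH := one_le_harmonicNumberPred hφ
  refine paramHSPotential_drift_of_drop hφ hmin hx (G := {δ})
    (ε := paramHSPotential φ f xstar α β x)
    (Finset.singleton_subset_iff.2 (Finset.mem_Icc.2 ⟨hδ1, by omega⟩)) (fun d hd => ?_) ?_
  · rw [Finset.mem_singleton.1 hd, paramHSNext_eq_of_add_eq hmin hx (Finset.mem_Icc.2 hxs) hδ,
      paramHSPotential_self hmin, sub_self]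
  · have hV := mul_le_paramHSPotential (f := f) (β := β) hα hx
    have hδH : (δ : ℝ) * harmonicNumberPred φ ≤ 4 * α * harmonicNumberPred φ * β := by
      nlinarith
    rw [Finset.sum_singleton, mul_one_div, le_div_iff₀ (by positivity)]
    linarith

lemma one_le_mul_sum_Icc_one_div_mul {α c : ℝ} {β k₀ δ : ℕ} (hα : 0 < α) (hc : 0 < c)
    (hβk₀ : β ≤ k₀) (hk₀δ : k₀ < δ) (hk₀ : (δ : ℝ) < 2 * α * (k₀ + 1)) (hβ : 4 * α * β < δ) :
    1 ≤ 4 * α * c * ∑ d ∈ Finset.Icc (δ - k₀) (δ - β), 1 / ((d : ℝ) * c) := by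
  have hcard : ((Finset.Icc (δ - k₀) (δ - β)).card : ℝ) = k₀ + 1 - β := by
    rw [Nat.card_Icc, show δ - β + 1 - (δ - k₀) = k₀ + 1 - β by omega, Nat.cast_sub (by omega)]
    push_cast
    ring
  have hsum := Finset.card_nsmul_le_sum (Finset.Icc (δ - k₀) (δ - β))
    (fun d : ℕ => 1 / ((d : ℝ) * c)) (1 / ((δ : ℝ) * c)) fun d hd => by
      have hd := Finset.mem_Icc.1 hd
      have h1 : (1 : ℝ) ≤ d := by exact_mod_cast (by omega : 1 ≤ d)
      have h2 : (d : ℝ) ≤ δ := by exact_mod_cast (by omega : d ≤ δ)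
      gcongr
  rw [nsmul_eq_mul, hcard] at hsum
  refine le_trans ?_ (mul_le_mul_of_nonneg_left hsum (by positivity))
  have hδ0 : (0 : ℝ) < δ := by exact_mod_cast (by omega : 0 < δ)
  rw [show 4 * α * c * ((k₀ + 1 - β) * (1 / (δ * c))) = 4 * α * (k₀ + 1 - β) / δ by field_simp,
    le_div_iff₀ hδ0]
  nlinarith

lemma paramHSPotential_drift_of_far (hφ : 2 ≤ φ) (hα : 1 ≤ α) (hβ1 : 1 ≤ β)
    (hmin : ∀ y ∈ Finset.Icc 1 φ, y ≠ xstar → f xstar < f y)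
    (huni : ApproxUnimodal φ f xstar α β) {x δ : ℕ} (hx : x ∈ (Finset.Icc 1 φ).erase xstar)
    (hxs : xstar ∈ Finset.Icc 1 φ) (hδ : xstar + δ = x ∨ x + δ = xstar)
    (hfar : 4 * α * β < δ) :
    ∑ y ∈ (Finset.Icc 1 φ).erase xstar,
        paramHSTransProb φ f x y * paramHSPotential φ f xstar α β y + 1
      ≤ paramHSPotential φ f xstar α β x := by
  have hα0 : 0 < α := one_pos.trans_le hα
  have hH := one_le_harmonicNumberPred hφ
  have hδφ : δ ≤ φ - 1 := by
    have := Finset.mem_Icc.1 (Finset.mem_of_mem_erase hx)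
    simp only [Finset.mem_Icc] at hxs
    omega
  -- The good step sizes are `δ - k` for `β ≤ k ≤ k₀`; there are at least `δ / (4α)` of them.
  set k₀ := ⌊(δ : ℝ) / (2 * α)⌋₊
  have hk₀ : 2 * α * k₀ ≤ δ := by
    have := Nat.floor_le (a := (δ : ℝ) / (2 * α)) (by positivity)
    rwa [le_div_iff₀ (by positivity), mul_comm] at this
  have hk₀' : (δ : ℝ) < 2 * α * (k₀ + 1) := by
    have := Nat.lt_floor_add_one ((δ : ℝ) / (2 * α))
    rwa [div_lt_iff₀ (by positivity), mul_comm] at this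
  have hβk₀ : β ≤ k₀ := Nat.le_floor <| by rw [le_div_iff₀ (by positivity)]; nlinarith
  have hk₀δ : k₀ < δ := by
    have : (k₀ : ℝ) < δ := by nlinarith
    exact_mod_cast this
  refine paramHSPotential_drift_of_drop hφ hmin hx (G := Finset.Icc (δ - k₀) (δ - β))
    (ε := 4 * α * harmonicNumberPred φ) (fun d hd => ?_) (fun d hd => ?_) ?_
  · simp only [Finset.mem_Icc] at hd ⊢; omega
  · have hd := Finset.mem_Icc.1 hd
    have hk : ((δ - d : ℕ) : ℝ) ≤ k₀ := by exact_mod_cast (by omega : δ - d ≤ k₀)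
    rw [show d = δ - (δ - d) by omega]
    exact paramHSPotential_paramHSNext_le_of_far hα0 hβ1 huni hx hxs hδ (by omega) (by omega)
      (by nlinarith)
  · exact one_le_mul_sum_Icc_one_div_mul hα0 (one_pos.trans_le hH) hβk₀ hk₀δ hk₀' hfar

lemma paramHSPotential_drift (hφ : 2 ≤ φ) (hα : 1 ≤ α) (hβ1 : 1 ≤ β)
    (hmin : ∀ y ∈ Finset.Icc 1 φ, y ≠ xstar → f xstar < f y)
    (huni : ApproxUnimodal φ f xstar α β) (hxs : xstar ∈ Finset.Icc 1 φ) {x : ℕ}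
    (hx : x ∈ (Finset.Icc 1 φ).erase xstar) :
    ∑ y ∈ (Finset.Icc 1 φ).erase xstar,
        paramHSTransProb φ f x y * paramHSPotential φ f xstar α β y + 1
      ≤ paramHSPotential φ f xstar α β x := by
  obtain ⟨δ, hδ⟩ : ∃ δ, xstar + δ = x ∨ x + δ = xstar := by
    rcases le_total xstar x with h | h
    exacts [⟨x - xstar, Or.inl (by omega)⟩, ⟨xstar - x, Or.inr (by omega)⟩]
  rcases le_or_gt (δ : ℝ) (4 * α * β) with hnear | hfar
  · exact paramHSPotential_drift_of_near hφ (by linarith) hmin hx hxs hδ hnear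
  · exact paramHSPotential_drift_of_far hφ hα hβ1 hmin huni hx hxs hδ hfar

lemma paramHSPotential_le (hα : 0 ≤ α) (hxs : xstar ∈ Finset.Icc 1 φ) (x : ℕ) :
    paramHSPotential φ f xstar α β x
      ≤ 4 * α * harmonicNumberPred φ * β + 4 * α * harmonicNumberPred φ * Real.logb 2 φ := by
  have hH := harmonicNumberPred_nonneg φ
  simp only [Finset.mem_Icc] at hxs
  have hφ : (1 : ℝ) ≤ φ := by exact_mod_cast hxs.1.trans hxs.2
  refine sublevelMax_le (by positivity [Real.logb_nonneg one_lt_two hφ]) fun w hw _ => ?_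
  have hwI := Finset.mem_Icc.1 (Finset.mem_of_mem_erase hw)
  have hw0 : 0 < |(w : ℝ) - xstar| :=
    one_pos.trans_le (Nat.one_le_abs_cast_sub (Finset.ne_of_mem_erase hw))
  have hwφ : |(w : ℝ) - xstar| ≤ φ := by
    rw [abs_le]
    have : (w : ℝ) ≤ φ := by exact_mod_cast hwI.2
    have : (xstar : ℝ) ≤ φ := by exact_mod_cast hxs.2
    constructor <;> linarith
  have hlog := (Real.logb_le_logb one_lt_two hw0 (by linarith)).2 hwφ
  exact (distPotential_le_of_logb_le hα hlog).trans_eq (by ring)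

end ParamHS

theorem paramHS_hitting_time_approx_unimodal_general
    {Ω : Type*} [MeasurableSpace Ω] (μ : Measure Ω) [IsProbabilityMeasure μ]
    (φ : ℕ) (hφ : 2 ≤ φ) (f : ℕ → ℝ)
    (xstar : ℕ) (hxs : xstar ∈ Finset.Icc 1 φ)
    (hmin : ∀ y ∈ Finset.Icc 1 φ, y ≠ xstar → f xstar < f y)
    (α : ℝ) (β : ℕ) (hα : 1 ≤ α) (hβ1 : 1 ≤ β)
    (huni : ApproxUnimodal φ f xstar α β)
    (x₀ : ℕ) (hx₀ : x₀ ∈ Finset.Icc 1 φ)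
    (X : ℕ → Ω → ℕ)
    (hstart : ∀ᵐ ω ∂μ, X 0 ω = x₀)
    (hmarkov : ∀ (t : ℕ) (h : ℕ → ℕ) (y : ℕ),
      μ {ω | (∀ s ≤ t, X s ω = h s) ∧ X (t + 1) ω = y}
        = ENNReal.ofReal (paramHSTransProb φ f (h t) y)
            * μ {ω | ∀ s ≤ t, X s ω = h s}) :
    ∫⁻ ω, (⨅ (t : ℕ) (_ : X t ω = xstar), (t : ENNReal)) ∂μ
      ≤ ENNReal.ofReal (4 * α * harmonicNumberPred φ * Real.logb 2 (φ : ℝ)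
          + 4 * α * (β : ℝ) * harmonicNumberPred φ) := by
  set S := (Finset.Icc 1 φ).erase xstar
  set V := paramHSPotential φ f xstar α β
  have hP : HasTransitions μ X fun x y => ENNReal.ofReal (paramHSTransProb φ f x y) := hmarkov
  have hclosed : ∀ x ∈ S, ∀ y ∉ S, y ≠ xstar → ENNReal.ofReal (paramHSTransProb φ f x y) = 0 :=
    fun x hx y hy hyx => by
      rw [paramHSTransProb_eq_zero_of_notMem (Finset.mem_of_mem_erase hx)
        fun hyI => hy (Finset.mem_erase.2 ⟨hyx, hyI⟩), ENNReal.ofReal_zero]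
  have hdrift : ∀ x ∈ S, ∑ y ∈ S, ENNReal.ofReal (paramHSTransProb φ f x y)
      * ENNReal.ofReal (V y) + 1 ≤ ENNReal.ofReal (V x) := fun x hx =>
    ENNReal.sum_ofReal_mul_add_one_le (fun y _ => paramHSTransProb_nonneg x y)
      (fun y _ => sublevelMax_nonneg y) (paramHSPotential_drift hφ hα hβ1 hmin huni hxs hx)
  calc ∫⁻ ω, hitTime X xstar ω ∂μ ≤ ENNReal.ofReal (V x₀) :=
        hP.lintegral_hitTime_le_of_drift hclosed hdrift (by rwa [Finset.insert_erase hxs]) hstart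
    _ ≤ _ := ENNReal.ofReal_le_ofReal <|
        (paramHSPotential_le (by linarith) hxs x₀).trans_eq (by ring)

/-- Theorem 4 of the paper.  Let `f : {1, …, φ} → ℝ` (with `φ ≥ 2`)
be injective with unique minimizer `xstar`, and `(α, β)`-approximately unimodal
for a real `α ≥ 1` and an integer `1 ≤ β ≤ φ`.  For any Markov chain `(X_t)` with
the ParamHS transition probabilities started at `X_0 = x₀ ∈ {1, …, φ}`, the
expected hitting time of `xstar` is at most
`4α·H_{φ−1}·log₂ φ + 4αβ·H_{φ−1}`.  The hitting time is the infimum in `ℝ≥0∞`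
and its expectation is the lower Lebesgue integral. -/
theorem paramHS_hitting_time_approx_unimodal
    {Ω : Type*} [MeasurableSpace Ω] (μ : Measure Ω) [IsProbabilityMeasure μ]
    (φ : ℕ) (hφ : 2 ≤ φ) (f : ℕ → ℝ) (hf : Set.InjOn f (Set.Icc 1 φ))
    (xstar : ℕ) (hxs : xstar ∈ Finset.Icc 1 φ)
    (hmin : ∀ y ∈ Finset.Icc 1 φ, y ≠ xstar → f xstar < f y)
    (α : ℝ) (β : ℕ) (hα : 1 ≤ α) (hβ1 : 1 ≤ β) (hβφ : β ≤ φ)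
    (huni : ApproxUnimodal φ f xstar α β)
    (x₀ : ℕ) (hx₀ : x₀ ∈ Finset.Icc 1 φ)
    (X : ℕ → Ω → ℕ)
    (hstart : ∀ᵐ ω ∂μ, X 0 ω = x₀)
    (hmarkov : ∀ (t : ℕ) (h : ℕ → ℕ) (y : ℕ),
      μ {ω | (∀ s ≤ t, X s ω = h s) ∧ X (t + 1) ω = y}
        = ENNReal.ofReal (paramHSTransProb φ f (h t) y)
            * μ {ω | ∀ s ≤ t, X s ω = h s}) :
    ∫⁻ ω, (⨅ (t : ℕ) (_ : X t ω = xstar), (t : ENNReal)) ∂μ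
      ≤ ENNReal.ofReal (4 * α * harmonicNumberPred φ * Real.logb 2 (φ : ℝ)
          + 4 * α * (β : ℝ) * harmonicNumberPred φ) :=
  paramHS_hitting_time_approx_unimodal_general μ φ hφ f xstar hxs hmin α β hα hβ1 huni x₀ hx₀ X
    hstart hmarkov
end
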